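/- Let (v, P) be a helical solution pair of the incompressible Euler equations ∂ₜv + (v·∇)v = −∇P, div v = 0 on Ω × (0,T), where Ω ⊆ ℝ³ is a helical domain and v is C², P is C¹. Let v_ξ = v·ξ be the helical swirl and w = (w₁,w₂,w₃) = ∇×v the vorticity. Then on Ω × (0,T): (i) ∂ₜ v_ξ + v·∇v_ξ = 0, and (ii) ∂ₜ w₃ + v·∇w₃ = (1/h)(∂_{x₂}v_ξ ∂_{x₁}v₃ − ∂_{x₁}v_ξ ∂_{x₂}v₃). -/

import Mathlib

noncomputable section

open Real

/-- ℝ³ as functions `Fin 3 → ℝ`. -/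
abbrev V3 := Fin 3 → ℝ

/-- Partial derivative `∂_{x_i} f` of a scalar function on ℝ³. -/
def pd3 (i : Fin 3) (f : V3 → ℝ) (x : V3) : ℝ := fderiv ℝ f x (Pi.single i 1)

/-- The helical transformation `H_θ(x) = Q_θ x + (0,0,hθ)`. -/
def Hmap (h θ : ℝ) (x : V3) : V3 :=
  ![x 0 * Real.cos θ + x 1 * Real.sin θ,
    -(x 0) * Real.sin θ + x 1 * Real.cos θ,
    x 2 + h * θ]

/-- The rotation `Q_θ = diag(R_θ, 1)` acting on vectors of ℝ³. -/
def Qrot (θ : ℝ) (v : V3) : V3 :=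
  ![v 0 * Real.cos θ + v 1 * Real.sin θ,
    -(v 0) * Real.sin θ + v 1 * Real.cos θ,
    v 2]

/-- The vector field `ξ(x) = (x₂, −x₁, h)`. -/
def xiVec (h : ℝ) (x : V3) : V3 := ![x 1, -(x 0), h]

/-- The helical swirl `v_ξ = v ⋅ ξ`. -/
def swirl (h : ℝ) (v : V3 → V3) (x : V3) : ℝ := ∑ i : Fin 3, v x i * xiVec h x i

/-- Third component of the vorticity: `w₃ = ∂₁v₂ − ∂₂v₁`. -/
def w3 (v : V3 → V3) (x : V3) : ℝ :=
  pd3 0 (fun y => v y 1) x - pd3 1 (fun y => v y 0) x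

/-!
Differentiating the symmetry relations in `θ` at `θ = 0` gives `(ξ·∇)P = 0` and
`(ξ·∇)v = (v₂, -v₁, 0)`. Write `Dₜ = ∂ₜ + v·∇` for the material derivative.

(i) `Dₜ v_ξ = ξ·Dₜv + v·(v·∇)ξ = -ξ·∇P = 0`, the middle term vanishing because `∇ξ` is
antisymmetric.

(ii) The commutator `[∂ₖ, Dₜ] f = ∂ₖv·∇f` applied to the Euler equations gives
`Dₜ w₃ = -(∂₁v·∇v₂ - ∂₂v·∇v₁)`, the pressure dropping out by Schwarz's theorem. Using
`div v = 0` and solving `(ξ·∇)vᵢ = …` for `h ∂₃vᵢ` turns the right-hand side into the stated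
expression in `∇v_ξ`.
-/

open Function Filter Topology

def materialDeriv (v : ℝ → V3 → V3) (f : ℝ → V3 → ℝ) (t : ℝ) (x : V3) : ℝ :=
  deriv (fun s => f s x) t + ∑ j : Fin 3, v t x j * pd3 j (f t) x

theorem ContinuousLinearMap.apply_eq_sum_single {ι E : Type*} [Fintype ι] [DecidableEq ι]
    [NormedAddCommGroup E] [NormedSpace ℝ E] (L : (ι → ℝ) →L[ℝ] E) (w : ι → ℝ) :
    L w = ∑ j, w j • L (Pi.single j 1) := by
  conv_lhs => rw [pi_eq_sum_univ' w]
  simp only [map_sum, map_smul]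

theorem ContDiffAt.eventually_differentiableAt {𝕜 E F : Type*} [NontriviallyNormedField 𝕜]
    [NormedAddCommGroup E] [NormedSpace 𝕜 E] [NormedAddCommGroup F] [NormedSpace 𝕜 F]
    {φ : E → F} {p : E} {n : ℕ} (hφ : ContDiffAt 𝕜 n φ p) (hn : n ≠ 0) :
    ∀ᶠ q in 𝓝 p, DifferentiableAt 𝕜 φ q :=
  (hφ.eventually (by simp)).mono fun _ hq => hq.differentiableAt (by exact_mod_cast hn)

section PartialDerivatives

variable {f g : V3 → ℝ} {x : V3}

lemma pd3_congr (h : f =ᶠ[𝓝 x] g) (j : Fin 3) : pd3 j f x = pd3 j g x := by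
  rw [pd3, pd3, h.fderiv_eq]

lemma HasFDerivAt.pd3_eq {L : V3 →L[ℝ] ℝ} (hf : HasFDerivAt f L x) (j : Fin 3) :
    pd3 j f x = L (Pi.single j 1) := by
  rw [pd3, hf.fderiv]

lemma pd3_neg (j : Fin 3) : pd3 j (fun y => -f y) x = -pd3 j f x := by
  simp [pd3, fderiv_fun_neg]

lemma fderiv_eq_sum_pd3 (f : V3 → ℝ) :
    fderiv ℝ f = fun y => ∑ j : Fin 3, pd3 j f y • ContinuousLinearMap.proj j := by
  ext y w
  rw [ContinuousLinearMap.apply_eq_sum_single]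
  simp [pd3, mul_comm]

lemma pd3_pd3_comm (hf : ∀ᶠ y in 𝓝 x, DifferentiableAt ℝ f y)
    (hpd : ∀ j, DifferentiableAt ℝ (pd3 j f) x) (i j : Fin 3) :
    pd3 i (pd3 j f) x = pd3 j (pd3 i f) x := by
  have hf' : DifferentiableAt ℝ (fderiv ℝ f) x := by
    rw [fderiv_eq_sum_pd3]
    fun_prop
  have hpd' (k : Fin 3) : HasFDerivAt (pd3 k f)
      ((ContinuousLinearMap.apply ℝ ℝ (Pi.single k 1)).comp (fderiv ℝ (fderiv ℝ f) x)) x :=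
    (ContinuousLinearMap.apply ℝ ℝ (Pi.single k 1 : V3)).hasFDerivAt.comp x hf'.hasFDerivAt
  rw [(hpd' j).pd3_eq, (hpd' i).pd3_eq]
  exact second_derivative_symmetric_of_eventually (hf.mono fun y hy => hy.hasFDerivAt)
    hf'.hasFDerivAt _ _

end PartialDerivatives

section MaterialDerivative

variable {v : ℝ → V3 → V3} {f g : ℝ → V3 → ℝ} {t : ℝ} {x : V3}

lemma HasFDerivAt.hasDerivAt_uncurry_left {L : ℝ × V3 →L[ℝ] ℝ}
    (hf : HasFDerivAt (uncurry f) L (t, x)) : HasDerivAt (fun s => f s x) (L (1, 0)) t :=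
  HasFDerivAt.comp_hasDerivAt (f := fun s => (s, x)) t hf
    ((hasDerivAt_id' t).prodMk (hasDerivAt_const t x))

lemma HasFDerivAt.hasFDerivAt_uncurry_right {L : ℝ × V3 →L[ℝ] ℝ}
    (hf : HasFDerivAt (uncurry f) L (t, x)) :
    HasFDerivAt (f t) (L.comp (ContinuousLinearMap.inr ℝ ℝ V3)) x :=
  hf.comp x (hasFDerivAt_prodMk_right t x)

lemma HasFDerivAt.pd3_uncurry_right {L : ℝ × V3 →L[ℝ] ℝ}
    (hf : HasFDerivAt (uncurry f) L (t, x)) (j : Fin 3) :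
    pd3 j (f t) x = L (0, Pi.single j 1) :=
  hf.hasFDerivAt_uncurry_right.pd3_eq j

lemma HasFDerivAt.materialDeriv_eq {L : ℝ × V3 →L[ℝ] ℝ}
    (hf : HasFDerivAt (uncurry f) L (t, x)) : materialDeriv v f t x = L (1, v t x) := by
  have hspace : L (0, v t x) = ∑ j : Fin 3, v t x j * L (0, Pi.single j 1) :=
    (L.comp (ContinuousLinearMap.inr ℝ ℝ V3)).apply_eq_sum_single (v t x)
  rw [materialDeriv, hf.hasDerivAt_uncurry_left.deriv]
  simp only [hf.pd3_uncurry_right]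
  rw [← hspace, ← map_add, Prod.mk_add_mk, add_zero, zero_add]

lemma materialDeriv_sub (hf : DifferentiableAt ℝ (uncurry f) (t, x))
    (hg : DifferentiableAt ℝ (uncurry g) (t, x)) :
    materialDeriv v (fun s y => f s y - g s y) t x
      = materialDeriv v f t x - materialDeriv v g t x := by
  rw [HasFDerivAt.materialDeriv_eq (f := fun s y => f s y - g s y)
    (hf.hasFDerivAt.sub hg.hasFDerivAt), hf.hasFDerivAt.materialDeriv_eq,
    hg.hasFDerivAt.materialDeriv_eq]
  rfl

lemma hasFDerivAt_uncurry_pd3 (hf : ContDiffAt ℝ 2 (uncurry f) (t, x)) (k : Fin 3) :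
    HasFDerivAt (uncurry fun s => pd3 k (f s))
      ((ContinuousLinearMap.apply ℝ ℝ ((0 : ℝ), (Pi.single k 1 : V3))).comp
        (fderiv ℝ (fderiv ℝ (uncurry f)) (t, x))) (t, x) := by
  have hA : DifferentiableAt ℝ (fderiv ℝ (uncurry f)) (t, x) :=
    (hf.fderiv_right (m := 1) (by norm_num)).differentiableAt (by simp)
  have hpd : uncurry (fun s => pd3 k (f s)) =ᶠ[𝓝 (t, x)]
      fun q => fderiv ℝ (uncurry f) q (0, Pi.single k 1) := by
    filter_upwards [hf.eventually_differentiableAt two_ne_zero] with ⟨s, y⟩ hq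
    exact hq.hasFDerivAt.pd3_uncurry_right k
  exact ((ContinuousLinearMap.apply ℝ ℝ ((0 : ℝ), (Pi.single k 1 : V3))).hasFDerivAt.comp
    (t, x) hA.hasFDerivAt).congr_of_eventuallyEq hpd

lemma materialDeriv_eventuallyEq (hf : ContDiffAt ℝ 2 (uncurry f) (t, x)) :
    materialDeriv v f t =ᶠ[𝓝 x] fun y => fderiv ℝ (uncurry f) (t, y) (1, v t y) := by
  have hslice : Tendsto (fun y : V3 => (t, y)) (𝓝 x) (𝓝 (t, x)) :=
    (by fun_prop : Continuous fun y : V3 => (t, y)).tendsto x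
  filter_upwards [hslice.eventually (hf.eventually_differentiableAt two_ne_zero)] with y hy
  exact hy.hasFDerivAt.materialDeriv_eq

lemma differentiableAt_materialDeriv (hf : ContDiffAt ℝ 2 (uncurry f) (t, x))
    (hv : DifferentiableAt ℝ (v t) x) : DifferentiableAt ℝ (materialDeriv v f t) x := by
  have hA : DifferentiableAt ℝ (fderiv ℝ (uncurry f)) (t, x) :=
    (hf.fderiv_right (m := 1) (by norm_num)).differentiableAt (by simp)
  refine DifferentiableAt.congr_of_eventuallyEq ?_ (materialDeriv_eventuallyEq hf)
  fun_prop

theorem pd3_materialDeriv (hf : ContDiffAt ℝ 2 (uncurry f) (t, x))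
    (hv : DifferentiableAt ℝ (v t) x) (k : Fin 3) :
    pd3 k (materialDeriv v f t) x = materialDeriv v (fun s => pd3 k (f s)) t x
      + ∑ j : Fin 3, pd3 k (fun y => v t y j) x * pd3 j (f t) x := by
  set A := fderiv ℝ (uncurry f)
  set A' := fderiv ℝ A (t, x)
  have hA : HasFDerivAt A A' (t, x) :=
    ((hf.fderiv_right (m := 1) (by norm_num)).differentiableAt (by simp)).hasFDerivAt
  have hAx : HasFDerivAt (fun y => A (t, y)) (A'.comp (ContinuousLinearMap.inr ℝ ℝ V3)) x :=
    hA.comp x (hasFDerivAt_prodMk_right t x)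
  have hlhs := (hAx.clm_apply ((hasFDerivAt_const (1 : ℝ) x).prodMk
    hv.hasFDerivAt)).congr_of_eventuallyEq (materialDeriv_eventuallyEq hf)
  have hvj (j : Fin 3) : pd3 k (fun y => v t y j) x = fderiv ℝ (v t) x (Pi.single k 1) j :=
    ((ContinuousLinearMap.proj j : V3 →L[ℝ] ℝ).hasFDerivAt.comp x hv.hasFDerivAt).pd3_eq k
  have hfj (j : Fin 3) : pd3 j (f t) x = A (t, x) (0, Pi.single j 1) :=
    (hf.eventually_differentiableAt two_ne_zero).self_of_nhds.hasFDerivAt.pd3_uncurry_right j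
  have hsymm : A' (0, Pi.single k 1) (1, v t x) = A' (1, v t x) (0, Pi.single k 1) :=
    hf.isSymmSndFDerivAt (by simp) _ _
  have hspace := ((A (t, x)).comp (ContinuousLinearMap.inr ℝ ℝ V3)).apply_eq_sum_single
    (fderiv ℝ (v t) x (Pi.single k 1))
  rw [hlhs.pd3_eq, (hasFDerivAt_uncurry_pd3 hf k).materialDeriv_eq]
  simp only [hvj, hfj, add_apply, ContinuousLinearMap.comp_apply,
    ContinuousLinearMap.prod_apply, ContinuousLinearMap.flip_apply, ContinuousLinearMap.inr_apply,
    ContinuousLinearMap.apply_apply, zero_apply, smul_eq_mul] at hspace ⊢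
  rw [hspace, hsymm, add_comm]

lemma materialDeriv_w3 {u : ℝ → V3 → V3}
    (hu : ∀ i, ContDiffAt ℝ 2 (uncurry fun s y => u s y i) (t, x)) :
    materialDeriv v (fun s => w3 (u s)) t x
      = materialDeriv v (fun s => pd3 0 fun y => u s y 1) t x
        - materialDeriv v (fun s => pd3 1 fun y => u s y 0) t x :=
  materialDeriv_sub (hasFDerivAt_uncurry_pd3 (hu 1) 0).differentiableAt
    (hasFDerivAt_uncurry_pd3 (hu 0) 1).differentiableAt

end MaterialDerivative
section Helical

lemma hasDerivAt_Hmap (h : ℝ) (x : V3) : HasDerivAt (fun θ => Hmap h θ x) (xiVec h x) 0 := by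
  rw [hasDerivAt_pi]
  intro i
  fin_cases i
  · simpa [Hmap, xiVec] using ((Real.hasDerivAt_cos 0).const_mul (x 0)).fun_add
      ((Real.hasDerivAt_sin 0).const_mul (x 1))
  · simpa [Hmap, xiVec] using ((Real.hasDerivAt_sin 0).const_mul (-x 0)).fun_add
      ((Real.hasDerivAt_cos 0).const_mul (x 1))
  · simpa [Hmap, xiVec] using ((hasDerivAt_id (0 : ℝ)).const_mul h).const_add (x 2)

lemma hasDerivAt_Qrot (w : V3) (i : Fin 3) :
    HasDerivAt (fun θ => Qrot θ w i) (![w 1, -w 0, 0] i) 0 := by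
  fin_cases i
  · simpa [Qrot] using ((Real.hasDerivAt_cos 0).const_mul (w 0)).fun_add
      ((Real.hasDerivAt_sin 0).const_mul (w 1))
  · simpa [Qrot] using ((Real.hasDerivAt_sin 0).const_mul (-w 0)).fun_add
      ((Real.hasDerivAt_cos 0).const_mul (w 1))
  · simpa [Qrot] using hasDerivAt_const (0 : ℝ) (w 2)

lemma Hmap_zero (h : ℝ) (x : V3) : Hmap h 0 x = x := by
  funext k
  fin_cases k <;> simp [Hmap]

variable {h : ℝ} {x : V3}

lemma hasDerivAt_comp_Hmap {g : V3 → ℝ} (hg : DifferentiableAt ℝ g x) :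
    HasDerivAt (fun θ => g (Hmap h θ x)) (∑ j : Fin 3, xiVec h x j * pd3 j g x) 0 := by
  rw [← Hmap_zero h x] at hg
  have := hg.hasFDerivAt.comp_hasDerivAt (0 : ℝ) (hasDerivAt_Hmap h x)
  rwa [Hmap_zero, ContinuousLinearMap.apply_eq_sum_single] at this

lemma sum_xiVec_mul_pd3_of_invariant {g : V3 → ℝ} (hg : DifferentiableAt ℝ g x)
    (hinv : ∀ θ, g (Hmap h θ x) = g x) : ∑ j : Fin 3, xiVec h x j * pd3 j g x = 0 := by
  have hconst : HasDerivAt (fun θ => g (Hmap h θ x)) 0 0 := by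
    simpa only [hinv] using hasDerivAt_const (0 : ℝ) (g x)
  exact (hasDerivAt_comp_Hmap hg).unique hconst

lemma sum_xiVec_mul_pd3_of_equivariant {u : V3 → V3} {i : Fin 3}
    (hu : DifferentiableAt ℝ (fun y => u y i) x) (hequiv : ∀ θ, u (Hmap h θ x) = Qrot θ (u x)) :
    ∑ j : Fin 3, xiVec h x j * pd3 j (fun y => u y i) x = ![u x 1, -u x 0, 0] i := by
  have hrot : HasDerivAt (fun θ => u (Hmap h θ x) i) (![u x 1, -u x 0, 0] i) 0 := by
    simpa only [hequiv] using hasDerivAt_Qrot (u x) i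
  exact (hasDerivAt_comp_Hmap hu).unique hrot

end Helical

section Swirl

lemma swirl_eq (h : ℝ) (u : V3 → V3) :
    swirl h u = fun y => u y 0 * y 1 + u y 1 * -y 0 + u y 2 * h := by
  funext y
  simp [swirl, xiVec, Fin.sum_univ_three]

variable {h : ℝ} {x : V3}

lemma pd3_swirl {u : V3 → V3} (hu : ∀ i, DifferentiableAt ℝ (fun y => u y i) x) (j : Fin 3) :
    pd3 j (swirl h u) x
      = ∑ i : Fin 3, xiVec h x i * pd3 j (fun y => u y i) x + ![-u x 1, u x 0, 0] j := by
  have hd := (((hu 0).hasFDerivAt.fun_mul (hasFDerivAt_apply 1 x)).fun_add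
    ((hu 1).hasFDerivAt.fun_mul (hasFDerivAt_apply 0 x).fun_neg)).fun_add
    ((hu 2).hasFDerivAt.mul_const h)
  rw [swirl_eq, hd.pd3_eq]
  fin_cases j <;> simp [pd3, xiVec, Fin.sum_univ_three] <;> ring

lemma materialDeriv_swirl {v : ℝ → V3 → V3} {t : ℝ}
    (hv : ∀ i, DifferentiableAt ℝ (uncurry fun s y => v s y i) (t, x)) :
    materialDeriv v (fun s => swirl h (v s)) t x
      = ∑ i : Fin 3, xiVec h x i * materialDeriv v (fun s y => v s y i) t x := by
  have hdt : HasDerivAt (fun s => swirl h (v s) x)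
      (∑ i : Fin 3, deriv (fun s => v s x i) t * xiVec h x i) t :=
    HasDerivAt.fun_sum fun i _ =>
      (hv i).hasFDerivAt.hasDerivAt_uncurry_left.differentiableAt.hasDerivAt.mul_const _
  have hdx (j : Fin 3) := pd3_swirl (h := h)
    (fun i => (hv i).hasFDerivAt.hasFDerivAt_uncurry_right.differentiableAt) j
  simp only [materialDeriv, hdt.deriv, hdx, xiVec, Fin.sum_univ_three]
  simp only [Fin.isValue, Matrix.cons_val_zero, Matrix.cons_val_one, mul_neg, Matrix.cons_val,
    neg_mul, add_zero]
  ring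

end Swirl

section Transport

variable {v : ℝ → V3 → V3} {p : V3 → ℝ} {h t : ℝ} {x : V3}

theorem materialDeriv_swirl_eq_zero
    (hv : ∀ i, DifferentiableAt ℝ (uncurry fun s y => v s y i) (t, x))
    (hp : DifferentiableAt ℝ p x) (hinv : ∀ θ, p (Hmap h θ x) = p x)
    (heuler : ∀ i, materialDeriv v (fun s y => v s y i) t x = -pd3 i p x) :
    materialDeriv v (fun s => swirl h (v s)) t x = 0 := by
  rw [materialDeriv_swirl hv]
  simp only [heuler, mul_neg, Finset.sum_neg_distrib,
    sum_xiVec_mul_pd3_of_invariant hp hinv, neg_zero]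

theorem materialDeriv_w3_eq (hh : h ≠ 0)
    (hv : ∀ i, ContDiffAt ℝ 2 (uncurry fun s y => v s y i) (t, x))
    (hequiv : ∀ θ, v t (Hmap h θ x) = Qrot θ (v t x))
    (hdiv : ∑ i : Fin 3, pd3 i (fun y => v t y i) x = 0)
    (hp : ∀ᶠ y in 𝓝 x, DifferentiableAt ℝ p y)
    (heuler : ∀ i, materialDeriv v (fun s y => v s y i) t =ᶠ[𝓝 x] fun y => -pd3 i p y) :
    materialDeriv v (fun s => w3 (v s)) t x
      = (1 / h) * (pd3 1 (swirl h (v t)) x * pd3 0 (fun y => v t y 2) x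
          - pd3 0 (swirl h (v t)) x * pd3 1 (fun y => v t y 2) x) := by
  have hvx (i : Fin 3) : DifferentiableAt ℝ (fun y => v t y i) x :=
    ((hv i).differentiableAt (by simp)).hasFDerivAt.hasFDerivAt_uncurry_right.differentiableAt
  have hvt : DifferentiableAt ℝ (v t) x := differentiableAt_pi.2 hvx
  have hdEuler (k i : Fin 3) : materialDeriv v (fun s => pd3 k fun y => v s y i) t x
      + ∑ j : Fin 3, pd3 k (fun y => v t y j) x * pd3 j (fun y => v t y i) x
      = -pd3 k (pd3 i p) x := by
    rw [← pd3_materialDeriv (hv i) hvt, pd3_congr (heuler i), pd3_neg]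
  have hpsymm : pd3 0 (pd3 1 p) x = pd3 1 (pd3 0 p) x :=
    pd3_pd3_comm hp (fun i => (differentiableAt_materialDeriv (hv i) hvt).neg
      |>.congr_of_eventuallyEq ((heuler i).mono fun y hy => by simp [hy])) 0 1
  have hξ0 := sum_xiVec_mul_pd3_of_equivariant (hvx 0) hequiv
  have hξ1 := sum_xiVec_mul_pd3_of_equivariant (hvx 1) hequiv
  have hξ2 := sum_xiVec_mul_pd3_of_equivariant (hvx 2) hequiv
  rw [materialDeriv_w3 hv, pd3_swirl hvx, pd3_swirl hvx, eq_comm, one_div,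
    inv_mul_eq_iff_eq_mul₀ hh]
  simp only [Fin.sum_univ_three, xiVec, Matrix.cons_val_zero, Matrix.cons_val_one,
    Matrix.cons_val_two, Matrix.head_cons, Matrix.tail_cons] at hdEuler hξ0 hξ1 hξ2 hdiv ⊢
  set a : Fin 3 → Fin 3 → ℝ := fun i j => pd3 j (fun y => v t y i) x
  linear_combination h * hdEuler 1 0 - h * hdEuler 0 1 + h * hpsymm + h * (a 1 0 - a 0 1) * hdiv
    + (a 0 1 - a 1 0) * hξ2 + a 2 0 * hξ1 - a 2 1 * hξ0

end Transport

theorem swirl_and_w3_transport_general (h T : ℝ) (hh : 0 < h)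
    (Ω : Set V3) (hΩopen : IsOpen Ω)
    (v : ℝ → V3 → V3) (P : ℝ → V3 → ℝ)
    (hv : ∀ i : Fin 3, ContDiffOn ℝ 2 (fun q : ℝ × V3 => v q.1 q.2 i)
      (Set.Ioo 0 T ×ˢ Ω))
    (hP : ContDiffOn ℝ 1 (fun q : ℝ × V3 => P q.1 q.2) (Set.Ioo 0 T ×ˢ Ω))
    (hhel : ∀ t ∈ Set.Ioo (0 : ℝ) T, ∀ θ : ℝ, ∀ x ∈ Ω,
      v t (Hmap h θ x) = Qrot θ (v t x) ∧ P t (Hmap h θ x) = P t x)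
    (heuler : ∀ t ∈ Set.Ioo (0 : ℝ) T, ∀ x ∈ Ω, ∀ i : Fin 3,
      deriv (fun s => v s x i) t
        + ∑ j : Fin 3, v t x j * pd3 j (fun y => v t y i) x = -(pd3 i (P t) x))
    (hdiv : ∀ t ∈ Set.Ioo (0 : ℝ) T, ∀ x ∈ Ω,
      ∑ i : Fin 3, pd3 i (fun y => v t y i) x = 0) :
    ∀ t ∈ Set.Ioo (0 : ℝ) T, ∀ x ∈ Ω,
      (deriv (fun s => swirl h (v s) x) t
          + ∑ j : Fin 3, v t x j * pd3 j (swirl h (v t)) x = 0) ∧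
      (deriv (fun s => w3 (v s) x) t
          + ∑ j : Fin 3, v t x j * pd3 j (w3 (v t)) x =
        (1 / h) * (pd3 1 (swirl h (v t)) x * pd3 0 (fun y => v t y 2) x
          - pd3 0 (swirl h (v t)) x * pd3 1 (fun y => v t y 2) x)) := by
  intro t ht x hx
  have hU (y : V3) (hy : y ∈ Ω) : Set.Ioo 0 T ×ˢ Ω ∈ 𝓝 (t, y) :=
    (isOpen_Ioo.prod hΩopen).mem_nhds ⟨ht, hy⟩
  have hvC2 (i : Fin 3) : ContDiffAt ℝ 2 (uncurry fun s y => v s y i) (t, x) :=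
    (hv i).contDiffAt (hU x hx)
  have hPt (y : V3) (hy : y ∈ Ω) : DifferentiableAt ℝ (P t) y :=
    ((hP.contDiffAt (hU y hy)).differentiableAt
      (by simp)).hasFDerivAt.hasFDerivAt_uncurry_right.differentiableAt
  have hΩx : Ω ∈ 𝓝 x := hΩopen.mem_nhds hx
  exact ⟨materialDeriv_swirl_eq_zero (fun i => (hvC2 i).differentiableAt (by simp)) (hPt x hx)
      (fun θ => (hhel t ht θ x hx).2) (heuler t ht x hx),
    materialDeriv_w3_eq hh.ne' hvC2 (fun θ => (hhel t ht θ x hx).1) (hdiv t ht x hx)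
      (eventually_of_mem hΩx hPt) fun i => eventually_of_mem hΩx fun y hy => heuler t ht y hy i⟩

/-- For a helical solution of the Euler equations, the helical swirl is transported,
and `w₃` satisfies the stated transport equation with source. -/
theorem swirl_and_w3_transport (h T : ℝ) (hh : 0 < h) (hT : 0 < T)
    (Ω : Set V3) (hΩopen : IsOpen Ω) (hΩ : ∀ θ : ℝ, Hmap h θ '' Ω = Ω)
    (v : ℝ → V3 → V3) (P : ℝ → V3 → ℝ)
    (hv : ∀ i : Fin 3, ContDiffOn ℝ 2 (fun q : ℝ × V3 => v q.1 q.2 i)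
      (Set.Ioo 0 T ×ˢ Ω))
    (hP : ContDiffOn ℝ 1 (fun q : ℝ × V3 => P q.1 q.2) (Set.Ioo 0 T ×ˢ Ω))
    (hhel : ∀ t ∈ Set.Ioo (0 : ℝ) T, ∀ θ : ℝ, ∀ x ∈ Ω,
      v t (Hmap h θ x) = Qrot θ (v t x) ∧ P t (Hmap h θ x) = P t x)
    (heuler : ∀ t ∈ Set.Ioo (0 : ℝ) T, ∀ x ∈ Ω, ∀ i : Fin 3,
      deriv (fun s => v s x i) t
        + ∑ j : Fin 3, v t x j * pd3 j (fun y => v t y i) x = -(pd3 i (P t) x))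
    (hdiv : ∀ t ∈ Set.Ioo (0 : ℝ) T, ∀ x ∈ Ω,
      ∑ i : Fin 3, pd3 i (fun y => v t y i) x = 0) :
    ∀ t ∈ Set.Ioo (0 : ℝ) T, ∀ x ∈ Ω,
      (deriv (fun s => swirl h (v s) x) t
          + ∑ j : Fin 3, v t x j * pd3 j (swirl h (v t)) x = 0) ∧
      (deriv (fun s => w3 (v s) x) t
          + ∑ j : Fin 3, v t x j * pd3 j (w3 (v t)) x =
        (1 / h) * (pd3 1 (swirl h (v t)) x * pd3 0 (fun y => v t y 2) x
          - pd3 0 (swirl h (v t)) x * pd3 1 (fun y => v t y 2) x)) :=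
  swirl_and_w3_transport_general h T hh Ω hΩopen v P hv hP hhel heuler hdiv
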